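/- arXiv:0705.0584 — 5 statements merged into one kernel-verified Lean document; each statement's English description precedes it below -/
import Mathlib

section
/- There is at most one homeomorphism Φ of [0,1] satisfying T = Φ∘F∘Φ^{-1}, where F is the Farey map and T is the tent map. -/
noncomputable def fareyMap (x : ℝ) : ℝ := if x < 1/2 then x / (1 - x) else (1 - x) / x

noncomputable def tentMap (x : ℝ) : ℝ := if x < 1/2 then 2 * x else 2 - 2 * x

noncomputable def fareyMapI (x : Set.Icc (0:ℝ) 1) : Set.Icc (0:ℝ) 1 :=
  Set.projIcc 0 1 (by norm_num) (fareyMap x)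

noncomputable def tentMapI (x : Set.Icc (0:ℝ) 1) : Set.Icc (0:ℝ) 1 :=
  Set.projIcc 0 1 (by norm_num) (tentMap x)

/-!
If Φ and Ψ both conjugate the Farey map to the tent map T, then K = Ψ ∘ Φ⁻¹ is a homeomorphism
of [0,1] commuting with T. It cannot reverse orientation, since T fixes 0 but sends 1 to 0; so
K is increasing and fixes 0, 1 and the only preimage 1/2 of 1 under T. Hence K preserves the two
halves of [0,1], on each of which T is injective, so K fixes every point whose T-image it fixes.
As T maps k/2^(m+1) to a dyadic rational with denominator 2^m, induction on m shows that K fixes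
all dyadic rationals, and by density and continuity K is the identity.
-/

open Set Function

lemma exists_dyadic_btwn {K : Type*} [Field K] [LinearOrder K] [IsStrictOrderedRing K]
    [Archimedean K] {x y : K} (h : x < y) :
    ∃ k : ℤ, ∃ m : ℕ, x < k / 2 ^ m ∧ (k : K) / 2 ^ m < y := by
  obtain ⟨m, hm⟩ := pow_unbounded_of_one_lt (y - x)⁻¹ one_lt_two
  obtain ⟨k, hk⟩ := exists_div_btwn (n := 2 ^ m) h (by exact_mod_cast hm)
  exact ⟨k, m, by exact_mod_cast hk⟩

lemma dense_dyadic_Icc :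
    Dense {x : Icc (0:ℝ) 1 | ∃ k : ℤ, ∃ m : ℕ, (x : ℝ) = k / 2 ^ m} := by
  refine dense_of_exists_between fun a b hab => ?_
  obtain ⟨k, m, hak, hkb⟩ := exists_dyadic_btwn (Subtype.coe_lt_coe.2 hab)
  exact ⟨⟨k / 2 ^ m, a.2.1.trans hak.le, hkb.le.trans b.2.2⟩, ⟨k, m, rfl⟩, hak, hkb⟩

lemma tentMap_mem_Icc {x : ℝ} (hx : x ∈ Icc (0:ℝ) 1) : tentMap x ∈ Icc (0:ℝ) 1 := by
  obtain ⟨h0, h1⟩ := hx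
  unfold tentMap
  split_ifs <;> constructor <;> linarith

@[simp]
lemma coe_tentMapI (x : Icc (0:ℝ) 1) : (tentMapI x : ℝ) = tentMap x := by
  rw [tentMapI, projIcc_of_mem _ (tentMap_mem_Icc x.2)]

lemma tentMap_eq_one_iff {x : ℝ} : tentMap x = 1 ↔ x = 1 / 2 := by
  unfold tentMap
  split_ifs <;> constructor <;> intro <;> linarith

lemma eq_of_tentMap_eq {x y : ℝ} (hxy : x < 1 / 2 ↔ y < 1 / 2) (h : tentMap x = tentMap y) :
    x = y := by
  unfold tentMap at h
  split_ifs at h <;> first | linarith | tauto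

lemma exists_tentMap_dyadic_eq (k : ℤ) (m : ℕ) :
    ∃ k' : ℤ, tentMap (k / 2 ^ (m + 1)) = k' / 2 ^ m := by
  unfold tentMap
  split_ifs
  · exact ⟨k, by ring⟩
  · exact ⟨2 ^ (m + 1) - k, by push_cast; field_simp; ring⟩

instance : Fact ((0:ℝ) ≤ 1) := ⟨zero_le_one⟩

lemma tentMapI_bot : tentMapI ⊥ = ⊥ :=
  Subtype.ext (by simp [tentMap])

lemma tentMapI_top : tentMapI ⊤ = ⊥ :=
  Subtype.ext (by norm_num [tentMap])

section CommuteTentMap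

variable {K : Icc (0:ℝ) 1 → Icc (0:ℝ) 1}

lemma strictMono_of_commute_tentMapI (hK : Function.Commute K tentMapI) (hc : Continuous K)
    (hb : Bijective K) : StrictMono K := by
  refine (hc.strictMono_of_inj_boundedOrder' hb.1).resolve_right fun hanti => ?_
  obtain ⟨z, hz⟩ := hb.2 ⊤
  have hbot : K ⊥ = ⊤ := top_le_iff.1 (hz ▸ hanti.antitone bot_le)
  have h := hK.eq ⊥
  rw [tentMapI_bot, hbot, tentMapI_top] at h
  exact bot_ne_top h.symm

lemma apply_half_of_commute_tentMapI (hK : Function.Commute K tentMapI) (hmono : StrictMono K)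
    (hsurj : Surjective K) : K ⟨1 / 2, by norm_num⟩ = ⟨1 / 2, by norm_num⟩ := by
  have htop : K ⊤ = ⊤ := (hmono.orderIsoOfSurjective K hsurj).map_top
  have h : tentMapI (K ⟨1 / 2, by norm_num⟩) = ⊤ := by
    rw [← hK.eq, ← htop]
    congr
    exact Subtype.ext (by norm_num [tentMap])
  exact Subtype.ext (tentMap_eq_one_iff.1 (by rw [← coe_tentMapI, h]; rfl))

lemma apply_eq_self_of_apply_tentMapI_eq (hK : Function.Commute K tentMapI) (hmono : StrictMono K)
    (hsurj : Surjective K) {x : Icc (0:ℝ) 1} (hx : K (tentMapI x) = tentMapI x) : K x = x := by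
  have hside : K x < ⟨1 / 2, by norm_num⟩ ↔ x < ⟨1 / 2, by norm_num⟩ := by
    have h := hmono.lt_iff_lt (a := x) (b := ⟨1 / 2, by norm_num⟩)
    rwa [apply_half_of_commute_tentMapI hK hmono hsurj] at h
  refine Subtype.ext (eq_of_tentMap_eq hside ?_)
  rw [← coe_tentMapI, ← coe_tentMapI, ← hK.eq x, hx]

lemma apply_dyadic_of_commute_tentMapI (hK : Function.Commute K tentMapI) (hmono : StrictMono K)
    (hsurj : Surjective K) (m : ℕ) (k : ℤ) (x : Icc (0:ℝ) 1) (hx : (x : ℝ) = k / 2 ^ m) :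
    K x = x := by
  induction m generalizing k x with
  | zero =>
    have hk0 : 0 ≤ k := by exact_mod_cast (by simpa [hx] using x.2.1 : (0:ℝ) ≤ k)
    have hk1 : k ≤ 1 := by exact_mod_cast (by simpa [hx] using x.2.2 : (k:ℝ) ≤ 1)
    interval_cases k
    · have : x = ⊥ := Subtype.ext (by simpa using hx)
      rw [this]; exact (hmono.orderIsoOfSurjective K hsurj).map_bot
    · have : x = ⊤ := Subtype.ext (by simpa using hx)
      rw [this]; exact (hmono.orderIsoOfSurjective K hsurj).map_top
  | succ m ih =>
    obtain ⟨k', hk'⟩ := exists_tentMap_dyadic_eq k m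
    exact apply_eq_self_of_apply_tentMapI_eq hK hmono hsurj
      (ih k' _ (by rw [coe_tentMapI, hx, hk']))

theorem eq_id_of_commute_tentMapI (hK : Function.Commute K tentMapI) (hc : Continuous K)
    (hb : Bijective K) : K = id := by
  have hmono := strictMono_of_commute_tentMapI hK hc hb
  refine hc.ext_on dense_dyadic_Icc continuous_id fun x ⟨k, m, hx⟩ => ?_
  exact apply_dyadic_of_commute_tentMapI hK hmono hb.2 m k x hx

end CommuteTentMap

theorem conjugating_homeo_unique
    (Φ Ψ : Set.Icc (0:ℝ) 1 ≃ₜ Set.Icc (0:ℝ) 1)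
    (hΦ : ∀ x, tentMapI (Φ x) = Φ (fareyMapI x))
    (hΨ : ∀ x, tentMapI (Ψ x) = Ψ (fareyMapI x)) :
    Φ = Ψ := by
  have hΦsymm : Semiconj Φ.symm tentMapI fareyMapI :=
    Semiconj.inverse_left (fun x => (hΦ x).symm) Φ.left_inv Φ.right_inv
  have hK : Function.Commute (Ψ ∘ Φ.symm) tentMapI :=
    Semiconj.comp_left (fun x => (hΨ x).symm) hΦsymm
  have hid := eq_id_of_commute_tentMapI hK (Ψ.continuous.comp Φ.symm.continuous)
    (Ψ.bijective.comp Φ.symm.bijective)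
  exact Homeomorph.ext fun x => by simpa using (congrFun hid (Φ x)).symm
end

section
/- Let Q_0 be the n×n integer matrix with (Q_0)_{ij} = 1 if ij=11 or ij=1n or i=j+1, (Q_0)_{ij} = -1 if i≥2 and j=n, and 0 otherwise. Then Q_0^n = 2·Id, where Id is the n×n identity matrix. -/
/-- The matrix Q₀ (indices zero-based: entry (i,j) corresponds to the paper's (i+1,j+1)). -/
def Qzero (n : ℕ) : Matrix (Fin n) (Fin n) ℤ := fun i j =>
  if (i.val = 0 ∧ j.val = 0) ∨ (i.val = 0 ∧ j.val = n - 1) ∨ i.val = j.val + 1 then 1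
  else if 1 ≤ i.val ∧ j.val = n - 1 then -1
  else 0

/-!
The vectors `sⱼ = e₀ + ⋯ + eⱼ` (`onesUpTo n j`) satisfy `Q₀ sⱼ = sⱼ₊₁` for `j < n - 1`
and `Q₀ sₙ₋₁ = 2 e₀`, so `Q₀ʲ e₀ = sⱼ` and `Q₀ⁿ e₀ = 2 e₀`. The `sⱼ` span `ℤⁿ`, so `e₀` is a
cyclic vector of `Q₀`; `Q₀ⁿ` commutes with `Q₀` and acts as `2` on `e₀`, hence on every
`Q₀ʲ e₀`, i.e. everywhere.
-/

open Matrix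

theorem Matrix.eq_smul_one_of_commute_of_span_pow_mulVec_eq_top {R ι : Type*} [CommRing R]
    [Fintype ι] [DecidableEq ι] {A B : Matrix ι ι R} (hAB : Commute A B) {v : ι → R} {c : R}
    (hv : A *ᵥ v = c • v) (hspan : Submodule.span R (Set.range fun k : ℕ => B ^ k *ᵥ v) = ⊤) :
    A = c • 1 := by
  have hA : ∀ w, A *ᵥ w = c • w := by
    intro w
    induction (hspan ▸ Submodule.mem_top : w ∈ _) using Submodule.span_induction with
    | mem x hx =>
      obtain ⟨k, rfl⟩ := hx
      rw [mulVec_mulVec, (hAB.pow_right k).eq, ← mulVec_mulVec, hv, mulVec_smul]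
    | zero => simp
    | add x y _ _ hx hy => rw [mulVec_add, hx, hy, smul_add]
    | smul a x _ hx => rw [mulVec_smul, hx, smul_comm]
  ext i j
  simpa [Pi.single_apply, one_apply, eq_comm] using congr_fun (hA (Pi.single j 1)) i

namespace Qzero

def onesUpTo (n j : ℕ) : Fin n → ℤ := fun i => if i.val ≤ j then 1 else 0

variable {n : ℕ}

-- `i - 1` is truncated: row `0` of `Q₀` picks up `v 0` as well as `v (n - 1)`.
theorem mulVec_apply (hn : 2 ≤ n) (v : Fin n → ℤ) (i : Fin n) :
    (Qzero n *ᵥ v) i =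
      v ⟨i - 1, by omega⟩ + (if i.val = 0 then 1 else -1) * v ⟨n - 1, by omega⟩ := by
  have hrow : Qzero n i = Pi.single ⟨i - 1, by omega⟩ 1
      + Pi.single ⟨n - 1, by omega⟩ (if i.val = 0 then 1 else -1) := by
    ext l
    simp only [Qzero, Pi.add_apply, Pi.single_apply, Fin.ext_iff]
    split_ifs <;> omega
  rw [mulVec, dotProduct_comm, hrow, dotProduct_add, dotProduct_single, dotProduct_single,
    mul_one, mul_comm]

theorem mulVec_onesUpTo (hn : 2 ≤ n) {j : ℕ} (hj : j + 1 < n) :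
    Qzero n *ᵥ onesUpTo n j = onesUpTo n (j + 1) := by
  ext i
  simp only [mulVec_apply hn, onesUpTo]
  split_ifs <;> omega

theorem mulVec_onesUpTo_pred (hn : 2 ≤ n) :
    Qzero n *ᵥ onesUpTo n (n - 1) = (2 : ℤ) • onesUpTo n 0 := by
  ext i
  simp only [mulVec_apply hn, onesUpTo, Pi.smul_apply, smul_eq_mul]
  split_ifs <;> omega

theorem pow_mulVec_onesUpTo_zero (hn : 2 ≤ n) {k : ℕ} (hk : k < n) :
    Qzero n ^ k *ᵥ onesUpTo n 0 = onesUpTo n k := by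
  induction k with
  | zero => simp
  | succ k ih => rw [pow_succ', ← mulVec_mulVec, ih (by omega), mulVec_onesUpTo hn hk]

theorem pow_self_mulVec_onesUpTo_zero (hn : 2 ≤ n) :
    Qzero n ^ n *ᵥ onesUpTo n 0 = (2 : ℤ) • onesUpTo n 0 := by
  obtain ⟨m, rfl⟩ : ∃ m, n = m + 1 := ⟨n - 1, by omega⟩
  rw [pow_succ', ← mulVec_mulVec, pow_mulVec_onesUpTo_zero hn (by omega)]
  exact mulVec_onesUpTo_pred hn

theorem span_pow_mulVec_onesUpTo_zero (hn : 2 ≤ n) :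
    Submodule.span ℤ (Set.range fun k : ℕ => Qzero n ^ k *ᵥ onesUpTo n 0) = ⊤ := by
  set S := Submodule.span ℤ (Set.range fun k : ℕ => Qzero n ^ k *ᵥ onesUpTo n 0)
  have hmem : ∀ j : Fin n, onesUpTo n j ∈ S := fun j =>
    pow_mulVec_onesUpTo_zero hn j.isLt ▸ Submodule.subset_span ⟨j, rfl⟩
  rw [eq_top_iff, ← (Pi.basisFun ℤ (Fin n)).span_eq, Submodule.span_le]
  rintro _ ⟨j, rfl⟩
  rw [SetLike.mem_coe, Pi.basisFun_apply]
  obtain hj | hj := Nat.eq_zero_or_pos j.val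
  · have hsingle : Pi.single j 1 = onesUpTo n j := by
      ext i
      simp only [Pi.single_apply, onesUpTo, Fin.ext_iff]
      split_ifs <;> omega
    exact hsingle ▸ hmem j
  · have hsingle : Pi.single j 1 = onesUpTo n j - onesUpTo n (j - 1) := by
      ext i
      simp only [Pi.single_apply, onesUpTo, Fin.ext_iff, Pi.sub_apply]
      split_ifs <;> omega
    exact hsingle ▸ S.sub_mem (hmem j) (hmem ⟨j - 1, by omega⟩)

end Qzero

theorem Qzero_pow_n (n : ℕ) (hn : 2 ≤ n) :
    Qzero n ^ n = (2 : ℤ) • (1 : Matrix (Fin n) (Fin n) ℤ) :=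
  eq_smul_one_of_commute_of_span_pow_mulVec_eq_top (Commute.pow_self (Qzero n) n)
    (Qzero.pow_self_mulVec_onesUpTo_zero hn) (Qzero.span_pow_mulVec_onesUpTo_zero hn)
end

section
/- Let Q_0 be as above, D the n×n diagonal matrix with diagonal entries (-1,1,...,1), and Q_1 = D·Q_0. Then for every t ≥ 1 and every sequence a_0,...,a_{t-1} ∈ {0,1}, there exists X ∈ GL_n(ℤ) such that Q_{a_{t-1}}···Q_{a_0} = X·Q_0^t (i.e., the two products have the same row Hermite Normal Form). -/
/-- The diagonal matrix D = diag(-1,1,…,1). -/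
def Dmat (n : ℕ) : Matrix (Fin n) (Fin n) ℤ :=
  Matrix.diagonal (fun i => if i.val = 0 then -1 else 1)

/-- Q₁ = D·Q₀. -/
def Qone (n : ℕ) : Matrix (Fin n) (Fin n) ℤ := Dmat n * Qzero n

open Matrix

section VecMulVec

variable {ι R : Type*} [Fintype ι] [DecidableEq ι] [CommRing R]

theorem one_sub_vecMulVec_mul_self {u w : ι → R} (h : w ⬝ᵥ u = 2) :
    (1 - vecMulVec u w) * (1 - vecMulVec u w) = 1 := by
  rw [sub_mul, mul_sub, mul_sub, vecMulVec_mul_vecMulVec, h, two_smul, vecMulVec_add]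
  simp only [mul_one, one_mul]
  abel

theorem mul_one_sub_vecMulVec {Q : Matrix ι ι R} {u u' w w' : ι → R} {c : R}
    (hu : Q *ᵥ u = c • u') (hw : w' ᵥ* Q = c • w) :
    Q * (1 - vecMulVec u w) = (1 - vecMulVec u' w') * Q := by
  rw [mul_sub, sub_mul, mul_vecMulVec, vecMulVec_mul, hu, hw, smul_vecMulVec, vecMulVec_smul,
    mul_one, one_mul]

end VecMulVec

section Monoid

variable {M : Type*} [Monoid M] {S : Set M} {q : M}

theorem Submonoid.exists_semiconjBy_of_mem_closure (hS : ∀ s ∈ S, ∃ s' ∈ S, SemiconjBy q s s')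
    {x : M} (hx : x ∈ Submonoid.closure S) : ∃ y ∈ Submonoid.closure S, SemiconjBy q x y := by
  induction hx using Submonoid.closure_induction with
  | mem s hs =>
    obtain ⟨s', hs', h⟩ := hS s hs
    exact ⟨s', Submonoid.subset_closure hs', h⟩
  | one => exact ⟨1, one_mem _, SemiconjBy.one_right q⟩
  | mul x y _ _ hx hy =>
    obtain ⟨x', hx', h⟩ := hx
    obtain ⟨y', hy', h'⟩ := hy
    exact ⟨x' * y', mul_mem hx' hy', h.mul_right h'⟩

theorem exists_prod_eq_mul_pow_length (hS : ∀ s ∈ S, ∃ s' ∈ S, SemiconjBy q s s') (L : List M)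
    (hL : ∀ m ∈ L, ∃ s ∈ Submonoid.closure S, m = s * q) :
    ∃ x ∈ Submonoid.closure S, L.prod = x * q ^ L.length := by
  induction L with
  | nil => exact ⟨1, one_mem _, by simp⟩
  | cons m L ih =>
    obtain ⟨x, hx, hprod⟩ := ih fun m' hm' => hL m' (List.mem_cons_of_mem m hm')
    obtain ⟨s, hs, rfl⟩ := hL m List.mem_cons_self
    obtain ⟨y, hy, hxy⟩ := Submonoid.exists_semiconjBy_of_mem_closure hS hx
    refine ⟨s * y, mul_mem hs hy, ?_⟩
    rw [List.prod_cons, hprod, List.length_cons, pow_succ', mul_assoc, ← mul_assoc q, hxy.eq]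
    simp only [mul_assoc]

end Monoid

section Reflection

variable {n : ℕ} [NeZero n]

def root (m : Fin n) : Fin n → ℤ := fun i => if i ≤ m then 1 else 0

def coroot (m : Fin n) : Fin n → ℤ := Pi.single 0 1 + Pi.single m 1

def reflection (m : Fin n) : Matrix (Fin n) (Fin n) ℤ := 1 - vecMulVec (root m) (coroot m)

theorem coroot_dotProduct_root (m : Fin n) : coroot m ⬝ᵥ root m = 2 := by
  simp [coroot, root, add_dotProduct, one_add_one_eq_two]

theorem reflection_mul_self (m : Fin n) : reflection m * reflection m = 1 :=
  one_sub_vecMulVec_mul_self (coroot_dotProduct_root m)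

end Reflection

namespace Qzero

variable {k : ℕ}

theorem row_zero : Qzero (k + 2) 0 = Pi.single 0 1 + Pi.single (Fin.last _) 1 := by
  ext j
  simp only [Qzero, show k + 2 - 1 = k + 1 from rfl, Pi.add_apply, Pi.single_apply, Fin.ext_iff,
    Fin.val_zero, Fin.val_last]
  split_ifs <;> grind

theorem row_succ (i : Fin (k + 1)) :
    Qzero (k + 2) i.succ = Pi.single i.castSucc 1 - Pi.single (Fin.last _) 1 := by
  ext j
  simp only [Qzero, show k + 2 - 1 = k + 1 from rfl, Pi.sub_apply, Pi.single_apply, Fin.ext_iff,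
    Fin.val_last, Fin.val_succ, Fin.val_castSucc]
  split_ifs <;> grind

theorem mulVec_zero (v : Fin (k + 2) → ℤ) : (Qzero (k + 2) *ᵥ v) 0 = v 0 + v (Fin.last _) := by
  change Qzero (k + 2) 0 ⬝ᵥ v = _
  simp [row_zero, add_dotProduct]

theorem mulVec_succ (v : Fin (k + 2) → ℤ) (i : Fin (k + 1)) :
    (Qzero (k + 2) *ᵥ v) i.succ = v i.castSucc - v (Fin.last _) := by
  change Qzero (k + 2) i.succ ⬝ᵥ v = _
  simp [row_succ, sub_dotProduct]

theorem mulVec_root_castSucc (i : Fin (k + 1)) :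
    Qzero (k + 2) *ᵥ root i.castSucc = root i.succ := by
  ext j
  cases j using Fin.cases with
  | zero => simp [mulVec_zero, root]
  | succ j => simp [mulVec_succ, root]

theorem mulVec_root_last : Qzero (k + 2) *ᵥ root (Fin.last _) = (2 : ℤ) • root 0 := by
  ext j
  cases j using Fin.cases with
  | zero => simp [mulVec_zero, root]
  | succ j => simp [mulVec_succ, root, Fin.le_last]

theorem coroot_vecMul (m : Fin (k + 2)) :
    coroot m ᵥ* Qzero (k + 2) = Qzero (k + 2) 0 + Qzero (k + 2) m := by
  rw [coroot, add_vecMul, single_one_vecMul, single_one_vecMul]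
  rfl

theorem coroot_succ_vecMul (i : Fin (k + 1)) :
    coroot i.succ ᵥ* Qzero (k + 2) = coroot i.castSucc := by
  rw [coroot_vecMul, row_zero, row_succ, coroot]
  abel

theorem coroot_zero_vecMul : coroot 0 ᵥ* Qzero (k + 2) = (2 : ℤ) • coroot (Fin.last _) := by
  rw [coroot_vecMul, row_zero, two_smul]
  rfl

theorem mul_reflection (m : Fin (k + 2)) :
    Qzero (k + 2) * reflection m = reflection (m + 1) * Qzero (k + 2) := by
  cases m using Fin.lastCases with
  | last =>
    rw [Fin.last_add_one]
    exact mul_one_sub_vecMulVec mulVec_root_last coroot_zero_vecMul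
  | cast i =>
    rw [Fin.coeSucc_eq_succ]
    exact mul_one_sub_vecMulVec (c := 1) (by rw [one_smul, mulVec_root_castSucc])
      (by rw [one_smul, coroot_succ_vecMul])

end Qzero

theorem Dmat_eq_reflection_zero (n : ℕ) [NeZero n] : Dmat n = reflection 0 := by
  ext i j
  simp only [Dmat, diagonal, Fin.val_eq_zero_iff, of_apply, reflection, coroot, Matrix.sub_apply,
    one_apply, vecMulVec_apply, root, nonpos_iff_eq_zero, Pi.add_apply, Pi.single_apply, ite_mul,
    one_mul, zero_mul]
  split_ifs <;> grind

theorem Qone_eq_reflection_zero_mul (n : ℕ) [NeZero n] : Qone n = reflection 0 * Qzero n := by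
  rw [Qone, Dmat_eq_reflection_zero]

theorem isUnit_of_mem_closure_reflection {n : ℕ} [NeZero n] {X : Matrix (Fin n) (Fin n) ℤ}
    (hX : X ∈ Submonoid.closure (Set.range reflection)) : IsUnit X := by
  refine Submonoid.closure_le (S := IsUnit.submonoid _).mpr ?_ hX
  rintro _ ⟨m, rfl⟩
  exact ⟨⟨_, _, reflection_mul_self m, reflection_mul_self m⟩, rfl⟩

theorem Qprod_same_HNF_general (n : ℕ) (hn : 2 ≤ n) (t : ℕ) (a : ℕ → Bool) :
    ∃ X : GL (Fin n) ℤ,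
      (List.ofFn (fun i : Fin t => if a i.val then Qone n else Qzero n)).reverse.prod
        = (X : Matrix (Fin n) (Fin n) ℤ) * Qzero n ^ t := by
  obtain ⟨k, rfl⟩ : ∃ k, n = k + 2 := ⟨n - 2, by omega⟩
  have hS : ∀ s ∈ Set.range reflection, ∃ s' ∈ Set.range reflection,
      SemiconjBy (Qzero (k + 2)) s s' := by
    rintro _ ⟨m, rfl⟩
    exact ⟨_, ⟨m + 1, rfl⟩, Qzero.mul_reflection m⟩
  have hfactors : ∀ M ∈ (List.ofFn fun i : Fin t =>
      if a i.val then Qone (k + 2) else Qzero (k + 2)).reverse,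
      ∃ s ∈ Submonoid.closure (Set.range reflection), M = s * Qzero (k + 2) := by
    simp only [List.mem_reverse, List.mem_ofFn]
    rintro _ ⟨i, rfl⟩
    split
    · exact ⟨reflection 0, Submonoid.subset_closure ⟨0, rfl⟩, Qone_eq_reflection_zero_mul _⟩
    · exact ⟨1, one_mem _, (one_mul _).symm⟩
  obtain ⟨X, hX, hprod⟩ := exists_prod_eq_mul_pow_length hS _ hfactors
  refine ⟨(isUnit_of_mem_closure_reflection hX).unit, ?_⟩
  simpa using hprod

theorem Qprod_same_HNF (n : ℕ) (hn : 2 ≤ n) (t : ℕ) (ht : 1 ≤ t) (a : ℕ → Bool) :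
    ∃ X : GL (Fin n) ℤ,
      (List.ofFn (fun i : Fin t => if a i.val then Qone n else Qzero n)).reverse.prod
        = (X : Matrix (Fin n) (Fin n) ℤ) * Qzero n ^ t :=
  Qprod_same_HNF_general n hn t a
end

section
/- A point p ∈ [0,1] is rational if and only if p is eventually mapped to 0 under iteration of the Farey map F. -/
/-!
Both branches of the Farey map are integral Möbius transformations, `F x = (1 - x)⁻¹ - 1` and
`F x = x⁻¹ - 1`, so `F` maps irrationals to irrationals and no irrational point ever reaches `0`.
Conversely, on a rational `a / b ∈ (0, 1)` in lowest terms the two branches give `a / (b - a)` and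
`(b - a) / a`, so the denominator strictly decreases until the orbit hits `0` or `1`, and `F 1 = 0`.
-/

open Set

theorem mapsTo_fareyMap_Icc : MapsTo fareyMap (Icc 0 1) (Icc 0 1) := by
  rintro x ⟨hx0, hx1⟩
  unfold fareyMap
  split_ifs with h
  · have : 0 < 1 - x := by linarith
    exact ⟨div_nonneg hx0 this.le, (div_le_one this).2 (by linarith)⟩
  · have : 0 < x := by linarith
    exact ⟨div_nonneg (by linarith) this.le, (div_le_one this).2 (by linarith)⟩

theorem Irrational.fareyMap {x : ℝ} (hx : Irrational x) : Irrational (fareyMap x) := by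
  unfold _root_.fareyMap
  split_ifs
  · have h1x : 1 - x ≠ 0 := sub_ne_zero.2 hx.ne_one.symm
    rw [show x / (1 - x) = (1 - x)⁻¹ - 1 by field_simp; ring]
    simpa using (hx.natCast_sub 1).inv.sub_natCast 1
  · rw [show (1 - x) / x = x⁻¹ - 1 by field_simp [hx.ne_zero]]
    simpa using hx.inv.sub_natCast 1

theorem Irrational.iterate_fareyMap {x : ℝ} (hx : Irrational x) (k : ℕ) :
    Irrational (_root_.fareyMap^[k] x) := by
  induction k with
  | zero => exact hx
  | succ k ih => rw [Function.iterate_succ_apply']; exact ih.fareyMap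

def ratFareyMap (q : ℚ) : ℚ := if q < 1/2 then q / (1 - q) else (1 - q) / q

theorem ratCast_ratFareyMap (q : ℚ) : (ratFareyMap q : ℝ) = fareyMap q := by
  have hcast : (q : ℝ) < 1 / 2 ↔ q < 1 / 2 := by
    rw [show (1 / 2 : ℝ) = ((1 / 2 : ℚ) : ℝ) by norm_num, Rat.cast_lt]
  unfold ratFareyMap fareyMap
  simp only [hcast]
  split_ifs <;> push_cast <;> rfl

theorem Rat.den_intCast_div_le {m n : ℤ} (hn : 0 < n) : (((m : ℚ) / n).den : ℤ) ≤ n :=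
  Int.le_of_dvd hn (by rw [← Rat.divInt_eq_div]; exact Rat.den_dvd m n)

theorem den_ratFareyMap_lt {q : ℚ} (h0 : 0 < q) (h1 : q < 1) : (ratFareyMap q).den < q.den := by
  have hnum : 0 < q.num := Rat.num_pos.2 h0
  have hnum_lt : q.num < q.den := Rat.num_lt_denom_iff.2 h1
  have hq : q * q.den = q.num := Rat.mul_den_eq_num q
  suffices ((ratFareyMap q).den : ℤ) < q.den by exact_mod_cast this
  unfold ratFareyMap
  split_ifs
  · have hsub : (0 : ℚ) < ((q.den - q.num : ℤ) : ℚ) := by exact_mod_cast sub_pos.2 hnum_lt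
    have : q / (1 - q) = (q.num : ℚ) / ((q.den - q.num : ℤ) : ℚ) := by
      rw [div_eq_div_iff (by linarith) hsub.ne']; push_cast; rw [← hq]; ring
    rw [this]
    linarith [Rat.den_intCast_div_le (m := q.num) (sub_pos.2 hnum_lt)]
  · have : (1 - q) / q = ((q.den - q.num : ℤ) : ℚ) / (q.num : ℚ) := by
      rw [div_eq_div_iff h0.ne' (by exact_mod_cast hnum.ne')]; push_cast; rw [← hq]; ring
    rw [this]
    linarith [Rat.den_intCast_div_le (m := q.den - q.num) hnum]

theorem exists_iterate_fareyMap_ratCast_eq_zero (q : ℚ) (hq : (q : ℝ) ∈ Icc (0 : ℝ) 1) :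
    ∃ k, fareyMap^[k] q = 0 := by
  rcases hq.1.eq_or_lt with h0 | h0
  · exact ⟨0, h0.symm⟩
  rcases hq.2.eq_or_lt with h1 | h1
  · exact ⟨1, by simp [h1, fareyMap]⟩
  have : (ratFareyMap q).den < q.den :=
    den_ratFareyMap_lt (by exact_mod_cast h0) (by exact_mod_cast h1)
  obtain ⟨k, hk⟩ := exists_iterate_fareyMap_ratCast_eq_zero (ratFareyMap q)
    (by rw [ratCast_ratFareyMap]; exact mapsTo_fareyMap_Icc hq)
  exact ⟨k + 1, by rwa [Function.iterate_succ_apply, ← ratCast_ratFareyMap]⟩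
termination_by q.den

theorem rational_iff_eventually_zero_farey (p : ℝ) (hp : p ∈ Set.Icc (0:ℝ) 1) :
    (∃ q : ℚ, p = (q : ℝ)) ↔ ∃ k : ℕ, fareyMap^[k] p = 0 := by
  constructor
  · rintro ⟨q, rfl⟩
    exact exists_iterate_fareyMap_ratCast_eq_zero q hp
  · rintro ⟨k, hk⟩
    by_contra hirr
    exact (Irrational.iterate_fareyMap (by simpa [Irrational, eq_comm] using hirr) k).ne_zero hk
end

section
/- If p ∈ [0,1] is preperiodic under the Farey map F (i.e., F^t(p) = F^s(p) for some 0 ≤ t < s), then p is an algebraic number of degree at most 2 over ℚ. -/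
/-!
Both branches of the Farey map are Möbius transformations whose inverses `y ↦ y / (1 + y)` and
`y ↦ 1 / (1 + y)` have nonnegative integer matrices, so `x = (a y + b) / (c y + d)` with
`y = F^[n] x`, natural `a, b, c, d`, `d ≥ 1` and, once `n ≥ 1`, `c ≥ 1`. For a periodic point
`y = F^[k] y` this is the nontrivial quadratic equation `c y² + (d - a) y - b = 0`; a preperiodic
`p` then lies in `ℚ(y)` for its periodic iterate `y = F^[t] p`, a field of degree at most `2`.
-/

open Polynomial IntermediateField

theorem fareyMap_mapsTo_Icc : Set.MapsTo fareyMap (Set.Icc 0 1) (Set.Icc 0 1) := by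
  rintro x ⟨hx0, hx1⟩
  unfold fareyMap
  split_ifs with hx
  · exact ⟨by apply div_nonneg <;> linarith, by rw [div_le_one (by linarith)]; linarith⟩
  · exact ⟨by apply div_nonneg <;> linarith, by rw [div_le_one (by linarith)]; linarith⟩

theorem mul_one_add_fareyMap_of_lt {y : ℝ} (hy : y < 1 / 2) :
    y * (1 + fareyMap y) = fareyMap y := by
  have : 1 - y ≠ 0 := by linarith
  rw [fareyMap, if_pos hy]
  field_simp
  ring

theorem mul_one_add_fareyMap_of_le {y : ℝ} (hy : 1 / 2 ≤ y) : y * (1 + fareyMap y) = 1 := by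
  have : y ≠ 0 := by linarith
  rw [fareyMap, if_neg hy.not_gt]
  field_simp
  ring

theorem exists_nat_mobius_iterate_fareyMap (x : ℝ) (n : ℕ) :
    ∃ a b c d : ℕ, 0 < d ∧ (0 < n → 0 < c) ∧
      x * (c * fareyMap^[n] x + d) = a * fareyMap^[n] x + b := by
  induction n with
  | zero => exact ⟨1, 0, 0, 1, one_pos, by simp, by simp⟩
  | succ n ih =>
    obtain ⟨a, b, c, d, hd, -, hx⟩ := ih
    rw [Function.iterate_succ_apply']
    set y := fareyMap^[n] x
    rcases lt_or_ge y (1 / 2) with hy | hy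
    · have hinv := mul_one_add_fareyMap_of_lt hy
      refine ⟨a + b, b, c + d, d, hd, fun _ => by omega, ?_⟩
      push_cast
      linear_combination (1 + fareyMap y) * hx + (a - c * x) * hinv
    · have hinv := mul_one_add_fareyMap_of_le hy
      refine ⟨b, a + b, d, c + d, by omega, fun _ => hd, ?_⟩
      push_cast
      linear_combination (1 + fareyMap y) * hx + (a - c * x) * hinv

theorem isIntegral_and_natDegree_minpoly_le_two_of_fareyMap_periodic {y : ℝ} {k : ℕ}
    (hk : 0 < k) (hy : fareyMap^[k] y = y) :
    IsIntegral ℚ y ∧ (minpoly ℚ y).natDegree ≤ 2 := by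
  obtain ⟨a, b, c, d, -, hc, hrel⟩ := exists_nat_mobius_iterate_fareyMap y k
  rw [hy] at hrel
  set q : ℚ[X] := C (c : ℚ) * X ^ 2 + C ((d : ℚ) - a) * X + C (-(b : ℚ))
  have hdeg : q.natDegree = 2 := natDegree_quadratic (by exact_mod_cast (hc hk).ne')
  have hq0 : q ≠ 0 := fun h => by simp [h] at hdeg
  have hqy : aeval y q = 0 := by
    simp only [q, map_add, map_mul, map_pow, aeval_X, map_neg, map_sub, map_natCast]
    linear_combination hrel
  have hint : IsIntegral ℚ y := IsAlgebraic.isIntegral ⟨q, hq0, hqy⟩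
  exact ⟨hint, hdeg ▸ natDegree_le_natDegree (minpoly.degree_le_of_ne_zero ℚ y hq0 hqy)⟩

theorem IntermediateField.natDegree_minpoly_le_of_mem_adjoin_simple {K L : Type*} [Field K]
    [Field L] [Algebra K L] {x y : L} (hy : IsIntegral K y) (hx : x ∈ K⟮y⟯) :
    IsIntegral K x ∧ (minpoly K x).natDegree ≤ (minpoly K y).natDegree := by
  have := adjoin.finiteDimensional hy
  let x' : K⟮y⟯ := ⟨x, hx⟩
  refine ⟨isIntegral_iff.1 (Algebra.IsIntegral.isIntegral x'), ?_⟩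
  rw [← minpoly_eq x', ← adjoin.finrank hy]
  exact minpoly.natDegree_le x'

theorem farey_preperiodic_is_quadratic (p : ℝ) (hp : p ∈ Set.Icc (0:ℝ) 1)
    (h : ∃ t s : ℕ, t < s ∧ fareyMap^[t] p = fareyMap^[s] p) :
    ∃ q : Polynomial ℚ, q ≠ 0 ∧ q.degree ≤ 2 ∧ Polynomial.aeval p q = 0 := by
  obtain ⟨t, s, hts, hper⟩ := h
  set y := fareyMap^[t] p
  have hy_periodic : fareyMap^[s - t] y = y := by
    rw [← Function.iterate_add_apply, Nat.sub_add_cancel hts.le, ← hper]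
  obtain ⟨hy_int, hy_deg⟩ := isIntegral_and_natDegree_minpoly_le_two_of_fareyMap_periodic
    (Nat.sub_pos_of_lt hts) hy_periodic
  have hp_mem : p ∈ ℚ⟮y⟯ := by
    obtain ⟨a, b, c, d, hd, -, hrel⟩ := exists_nat_mobius_iterate_fareyMap p t
    have hy0 : 0 ≤ y := (fareyMap_mapsTo_Icc.iterate t hp).1
    have hy_mem : y ∈ ℚ⟮y⟯ := mem_adjoin_simple_self ℚ y
    rw [eq_div_of_mul_eq (by positivity) hrel]
    exact div_mem (add_mem (mul_mem (IntermediateField.natCast_mem _ a) hy_mem)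
        (IntermediateField.natCast_mem _ b))
      (add_mem (mul_mem (IntermediateField.natCast_mem _ c) hy_mem)
        (IntermediateField.natCast_mem _ d))
  obtain ⟨hp_int, hp_deg⟩ := natDegree_minpoly_le_of_mem_adjoin_simple hy_int hp_mem
  exact ⟨minpoly ℚ p, minpoly.ne_zero hp_int,
    degree_le_of_natDegree_le (hp_deg.trans hy_deg), minpoly.aeval ℚ p⟩
end
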